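/- Let G be a finite bipartite (Tanner) graph with variable-node set V and check-node set C, where variable node j has degree d_j and runs MB^{ω_j} with 0 ≤ ω_j ≤ d_j − 1 − ⌈d_j/2⌉. Let S ⊆ V, set m₀(j) = −1 for j ∈ S and +1 otherwise, and let C_o(S) be the set of check nodes with an odd number of neighbors in S. Assume every variable node j has at most ⌈d_j/2⌉ + ω_j − 1 neighbors in C_o(S). If at some iteration every variable node j sends m₀(j) along all of its edges, then after the check-node update and the MB^{ω_j} variable-node update, every variable node j again sends m₀(j) along all of its edges. In particular, the configuration in which every variable node sends its channel message is a fixed point of the message-passing map, and all messages exchanged between variable nodes and check nodes remain unchanged throughout all subsequent iterations. -/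

import Mathlib

/-!
When every variable node sends its channel message, check node `c` answers `j` with
`∏_{v ∈ N(c) \ {j}} m₀ v`, and multiplying by `m₀ j = ±1` shows this equals `-m₀ j` exactly
when `∏_{v ∈ N(c)} m₀ v = (-1)^{|N(c) ∩ S|}` is `-1`, i.e. when `c ∈ C_o(S)`. So at most
`|N(j) ∩ C_o(S)| < ⌈d_j/2⌉ + ω_j` messages reaching `j` disagree with `m₀ j`, too few for the
MB^{ω_j} rule to flip, and `j` keeps sending `m₀ j`. Iterating from the channel messages gives
the fixed point.
-/

open Finset

/-- `⌈d/2⌉` for a natural number `d`. -/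
def ceilHalf (d : ℕ) : ℕ := (d + 1) / 2

/-- The check-node neighbors of variable node `j`. -/
def varNbrs {V C : Type*} [Fintype C] (adj : V → C → Prop)
    [∀ j c, Decidable (adj j c)] (j : V) : Finset C :=
  Finset.univ.filter (fun c => adj j c)

/-- The variable-node neighbors of check node `c`. -/
def chkNbrs {V C : Type*} [Fintype V] (adj : V → C → Prop)
    [∀ j c, Decidable (adj j c)] (c : C) : Finset V :=
  Finset.univ.filter (fun v => adj v c)

/-- The degree `d_j` of variable node `j`. -/
def varDeg {V C : Type*} [Fintype C] (adj : V → C → Prop)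
    [∀ j c, Decidable (adj j c)] (j : V) : ℕ :=
  (varNbrs adj j).card

/-- The set `C_o(S)` of check nodes having an odd number of neighbors in `S`. -/
def Codd {V C : Type*} [Fintype V] [Fintype C] [DecidableEq V] (adj : V → C → Prop)
    [∀ j c, Decidable (adj j c)] (S : Finset V) : Finset C :=
  Finset.univ.filter (fun c => Odd ((chkNbrs adj c ∩ S).card))

/-- Check-node update: the message sent by check node `c` to variable node `j` is
the product of the extrinsic incoming variable-to-check messages. -/
def checkMsg {V C : Type*} [Fintype V] [DecidableEq V] (adj : V → C → Prop)
    [∀ j c, Decidable (adj j c)] (μ : V → C → ℤ) (c : C) (j : V) : ℤ :=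
  ∏ v ∈ (chkNbrs adj c).erase j, μ v c

/-- Variable-node update of MB^{ω j}: variable node `j` sends `-m₀ j` to check node `c`
if at least `⌈d_j/2⌉ + ω j` of the extrinsic incoming check-to-variable messages equal
`-m₀ j`, and `m₀ j` otherwise. -/
def varMsg {V C : Type*} [Fintype C] [DecidableEq C] (adj : V → C → Prop)
    [∀ j c, Decidable (adj j c)] (m₀ : V → ℤ) (ω : V → ℕ)
    (inc : C → V → ℤ) (j : V) (c : C) : ℤ :=
  if ceilHalf (varDeg adj j) + ω j ≤
      (((varNbrs adj j).erase c).filter (fun c' => inc c' j = -m₀ j)).card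
  then -m₀ j else m₀ j

/-- One full iteration of message passing: the check-node update followed by the
MB^{ω} variable-node update. -/
def iterMap {V C : Type*} [Fintype V] [Fintype C] [DecidableEq V] [DecidableEq C]
    (adj : V → C → Prop) [∀ j c, Decidable (adj j c)] (m₀ : V → ℤ) (ω : V → ℕ)
    (μ : V → C → ℤ) : V → C → ℤ :=
  fun j c => varMsg adj m₀ ω (checkMsg adj μ) j c

theorem mem_chkNbrs {V C : Type*} [Fintype V] (adj : V → C → Prop)
    [∀ j c, Decidable (adj j c)] {c : C} {j : V} : j ∈ chkNbrs adj c ↔ adj j c := by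
  simp [chkNbrs]

theorem mem_varNbrs {V C : Type*} [Fintype C] (adj : V → C → Prop)
    [∀ j c, Decidable (adj j c)] {j : V} {c : C} : c ∈ varNbrs adj j ↔ adj j c := by
  simp [varNbrs]

section Messages

variable {V C : Type*} [Fintype V] [DecidableEq V] (adj : V → C → Prop)
  [∀ j c, Decidable (adj j c)]

theorem checkMsg_mul_eq_prod (μ : V → C → ℤ) {j : V} {c : C} (hjc : adj j c) :
    checkMsg adj μ c j * μ j c = ∏ v ∈ chkNbrs adj c, μ v c :=
  prod_erase_mul _ _ ((mem_chkNbrs adj).2 hjc)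

theorem prod_chkNbrs_eq_neg_one_iff [Fintype C] {S : Finset V} {m₀ : V → ℤ}
    (hm₀ : ∀ j : V, m₀ j = if j ∈ S then -1 else 1) (c : C) :
    ∏ v ∈ chkNbrs adj c, m₀ v = -1 ↔ c ∈ Codd adj S := by
  simp only [hm₀, prod_ite_mem, prod_const, Codd, mem_filter, mem_univ, true_and]
  exact neg_one_pow_eq_neg_one_iff_odd (by norm_num)

theorem mem_Codd_of_checkMsg_eq_neg [Fintype C] {S : Finset V} {m₀ : V → ℤ}
    (hm₀ : ∀ j : V, m₀ j = if j ∈ S then -1 else 1)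
    {μ : V → C → ℤ} (hμ : ∀ (j : V) (c : C), adj j c → μ j c = m₀ j)
    {j : V} {c : C} (hjc : adj j c) (hneg : checkMsg adj μ c j = -m₀ j) :
    c ∈ Codd adj S := by
  have hsq : m₀ j * m₀ j = 1 := by rw [hm₀ j]; split_ifs <;> norm_num
  rw [← prod_chkNbrs_eq_neg_one_iff adj hm₀]
  calc ∏ v ∈ chkNbrs adj c, m₀ v
      = ∏ v ∈ chkNbrs adj c, μ v c :=
        prod_congr rfl fun v hv => (hμ v c ((mem_chkNbrs adj).1 hv)).symm
    _ = checkMsg adj μ c j * μ j c := (checkMsg_mul_eq_prod adj μ hjc).symm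
    _ = -1 := by rw [hneg, hμ j c hjc, neg_mul, hsq]

end Messages

theorem varMsg_eq_self_of_card_lt {V C : Type*} [Fintype C] [DecidableEq C]
    (adj : V → C → Prop) [∀ j c, Decidable (adj j c)] (m₀ : V → ℤ) (ω : V → ℕ)
    (inc : C → V → ℤ) {j : V}
    (hfew : ((varNbrs adj j).filter (fun c' => inc c' j = -m₀ j)).card <
      ceilHalf (varDeg adj j) + ω j)
    (c : C) : varMsg adj m₀ ω inc j c = m₀ j := by
  refine if_neg (Nat.not_le.2 (lt_of_le_of_lt (card_le_card ?_) hfew))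
  exact filter_subset_filter _ (erase_subset c _)

theorem iterMap_eq_channel {V C : Type*} [Fintype V] [Fintype C] [DecidableEq V]
    [DecidableEq C] (adj : V → C → Prop) [∀ j c, Decidable (adj j c)]
    (ω : V → ℕ) {S : Finset V} {m₀ : V → ℤ}
    (hm₀ : ∀ j : V, m₀ j = if j ∈ S then -1 else 1)
    (hS : ∀ j : V, ((varNbrs adj j ∩ Codd adj S).card : ℤ) ≤
        (ceilHalf (varDeg adj j) : ℤ) + (ω j : ℤ) - 1)
    {μ : V → C → ℤ} (hμ : ∀ (j : V) (c : C), adj j c → μ j c = m₀ j)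
    (j : V) (c : C) : iterMap adj m₀ ω μ j c = m₀ j := by
  refine varMsg_eq_self_of_card_lt adj m₀ ω _ ?_ c
  have hsub : (varNbrs adj j).filter (fun c' => checkMsg adj μ c' j = -m₀ j) ⊆
      varNbrs adj j ∩ Codd adj S := fun c' hc' => by
    obtain ⟨hmem, hneg⟩ := mem_filter.1 hc'
    exact mem_inter.2
      ⟨hmem, mem_Codd_of_checkMsg_eq_neg adj hm₀ hμ ((mem_varNbrs adj).1 hmem) hneg⟩
  have := card_le_card hsub
  have := hS j
  omega

theorem channel_messages_fixed_point_general
    {V C : Type*} [Fintype V] [Fintype C] [DecidableEq V] [DecidableEq C]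
    (adj : V → C → Prop) [∀ j c, Decidable (adj j c)]
    (ω : V → ℕ) (S : Finset V) (m₀ : V → ℤ)
    -- channel messages: m₀ j = −1 on S and +1 elsewhere
    (hm₀ : ∀ j : V, m₀ j = if j ∈ S then -1 else 1)
    -- every variable node j has at most ⌈d_j/2⌉ + ω j − 1 neighbors in C_o(S)
    (hS : ∀ j : V, ((varNbrs adj j ∩ Codd adj S).card : ℤ) ≤
        (ceilHalf (varDeg adj j) : ℤ) + (ω j : ℤ) - 1)
    -- at some iteration every variable node sends m₀(j) along all of its edges
    (μ : V → C → ℤ) (hμ : ∀ (j : V) (c : C), adj j c → μ j c = m₀ j) :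
    -- after one more iteration every variable node again sends m₀(j) on all its edges,
    (∀ (j : V) (c : C), adj j c → iterMap adj m₀ ω μ j c = m₀ j) ∧
    -- and in particular all messages remain unchanged throughout all iterations
    (∀ (l : ℕ) (j : V) (c : C), adj j c →
        (iterMap adj m₀ ω)^[l] (fun v _ => m₀ v) j c = m₀ j) := by
  refine ⟨fun j c _ => iterMap_eq_channel adj ω hm₀ hS hμ j c, fun l => ?_⟩
  induction l with
  | zero => exact fun j c _ => rfl
  | succ n ih =>
    intro j c _
    rw [Function.iterate_succ_apply']
    exact iterMap_eq_channel adj ω hm₀ hS ih j c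

theorem channel_messages_fixed_point
    {V C : Type*} [Fintype V] [Fintype C] [DecidableEq V] [DecidableEq C]
    (adj : V → C → Prop) [∀ j c, Decidable (adj j c)]
    (ω : V → ℕ) (S : Finset V) (m₀ : V → ℤ)
    -- each variable node runs MB^{ω j} with 0 ≤ ω j ≤ d_j − 1 − ⌈d_j/2⌉
    (hω : ∀ j : V, (ω j : ℤ) ≤ (varDeg adj j : ℤ) - 1 - (ceilHalf (varDeg adj j) : ℤ))
    -- channel messages: m₀ j = −1 on S and +1 elsewhere
    (hm₀ : ∀ j : V, m₀ j = if j ∈ S then -1 else 1)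
    -- every variable node j has at most ⌈d_j/2⌉ + ω j − 1 neighbors in C_o(S)
    (hS : ∀ j : V, ((varNbrs adj j ∩ Codd adj S).card : ℤ) ≤
        (ceilHalf (varDeg adj j) : ℤ) + (ω j : ℤ) - 1)
    -- at some iteration every variable node sends m₀(j) along all of its edges
    (μ : V → C → ℤ) (hμ : ∀ (j : V) (c : C), adj j c → μ j c = m₀ j) :
    -- after one more iteration every variable node again sends m₀(j) on all its edges,
    (∀ (j : V) (c : C), adj j c → iterMap adj m₀ ω μ j c = m₀ j) ∧
    -- and in particular all messages remain unchanged throughout all iterations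
    (∀ (l : ℕ) (j : V) (c : C), adj j c →
        (iterMap adj m₀ ω)^[l] (fun v _ => m₀ v) j c = m₀ j) :=
  channel_messages_fixed_point_general adj ω S m₀ hm₀ hS μ hμ
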